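/- Let Q' = (q₂,…,q_m, w₀q₁w₀) be the jumping word of Q_c and σ : [m] → [m] the cyclic shift with σ(i) = i−1 for i ≥ 2 and σ(1) = m. Let I be a c-cluster of Q_c, I' := σ(I), and for k ∈ [m] set k' := σ(k). Writing r' for the root function computed in the word Q', one has: r'(I',k') = −r(I,k) if k = 1 and 1 ∈ I; r'(I',k') = r(I,k) if k = 1 and 1 ∉ I; r'(I',k') = r(I,k) if k ≠ 1 and 1 ∈ I; and r'(I',k') = q₁·r(I,k) if k ≠ 1 and 1 ∉ I. -/

import Mathlib

open scoped Classical

noncomputable section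

namespace CP

variable {B : Type} [DecidableEq B] [Fintype B] [Nonempty B]
variable {W : Type} [Group W]

/-- An arbitrary element of `B`, used as a junk value for `List.getD`. -/
def arb (B : Type) [Nonempty B] : B := Classical.arbitrary B

/-- The bilinear form of the standard geometric representation of a Coxeter system:
`⟨αᵢ, αⱼ⟩ = -cos (π / Mᵢⱼ)`, extended bilinearly. -/
def bil (M : CoxeterMatrix B) (u v : B → ℝ) : ℝ :=
  ∑ i, ∑ j, u i * v j * (-(Real.cos (Real.pi / (M i j))))

/-- The simple roots: the standard basis vectors of `V = ℝ^B`. -/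
def sroot (i : B) : B → ℝ := Pi.single i 1

/-- The root system: the orbit of the simple roots under `W`. -/
def rootSystem (π : Representation ℝ W (B → ℝ)) : Set (B → ℝ) :=
  {v | ∃ (w : W) (i : B), v = π w (sroot i)}

/-- The positive roots: roots with non-negative coordinates on the simple roots. -/
def posRoots (π : Representation ℝ W (B → ℝ)) : Set (B → ℝ) :=
  {v ∈ rootSystem π | ∀ i, 0 ≤ v i}

/-- The almost positive roots: positive roots plus negatives of simple roots. -/
def almostPos (π : Representation ℝ W (B → ℝ)) : Set (B → ℝ) :=
  posRoots π ∪ Set.range (fun i => -sroot i)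

variable {M : CoxeterMatrix B}

/-- `l` is a reduced word for `w`. -/
def IsRW (cs : CoxeterSystem M W) (w : W) (l : List B) : Prop :=
  cs.wordProd l = w ∧ l.length = cs.length w

/-- The letter of the infinite word `c^∞` at position `t` (`0`-indexed). -/
def cInf [Nonempty B] (cword : List B) (t : ℕ) : B := cword.getD (t % cword.length) (arb B)

/-- `f ≤ g` in the lexicographic order on sequences of positions. -/
def LexLE {N : ℕ} (f g : Fin N → ℕ) : Prop :=
  f = g ∨ ∃ k, (∀ l, l < k → f l = g l) ∧ f k < g k

/-- The subword of `Q` indexed by the complement of `I` (positions are `0`-indexed). -/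
def complWord [Nonempty B] (Q : List B) (I : Finset ℕ) : List B :=
  ((List.range Q.length).filter (· ∉ I)).map (fun k => Q.getD k (arb B))

/-- `I` is a `c`-cluster of the word `Q`: the complementary subword is a reduced word
for the longest element `w₀`. -/
def IsCluster (cs : CoxeterSystem M W) (w₀ : W) (Q : List B) (I : Finset ℕ) : Prop :=
  I ⊆ Finset.range Q.length ∧ IsRW cs w₀ (complWord Q I)

/-- The root function `r(I, j)`. -/
def rootFn (cs : CoxeterSystem M W) (π : Representation ℝ W (B → ℝ))
    (Q : List B) (I : Finset ℕ) (j : ℕ) : B → ℝ :=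
  π (cs.wordProd (((List.range j).filter (· ∉ I)).map (fun x => Q.getD x (arb B))))
    (sroot (Q.getD j (arb B)))

/-- `ρ` is a family of coefficients expanding `r(I, j)` on the root configuration
`R(I) = (r(I, i))_{i ∈ I}`. -/
def IsExpansion (cs : CoxeterSystem M W) (π : Representation ℝ W (B → ℝ))
    (Q : List B) (I : Finset ℕ) (j : ℕ) (ρ : ℕ → ℝ) : Prop :=
  rootFn cs π Q I j = ∑ i ∈ I, ρ i • rootFn cs π Q I i

/-- The rotation map `τ_c` on positions of the word `Q` (`0`-indexed): the position of the next
occurrence of the letter `q_i` if it exists, and the first occurrence of `η (q_i) = w₀ q_i w₀`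
otherwise. -/
def rot [Nonempty B] (Q : List B) (η : B → B) (i : ℕ) : ℕ :=
  if h : ∃ j, j < Q.length ∧ i < j ∧ Q.getD j (arb B) = Q.getD i (arb B) then Nat.find h
  else if h2 : ∃ j, j < Q.length ∧ Q.getD j (arb B) = η (Q.getD i (arb B)) then Nat.find h2
  else i

/-- The map `ϑ_c` from positions of the word `Q_c = cword ++ sw` to almost positive roots. -/
def theta (cs : CoxeterSystem M W) (π : Representation ℝ W (B → ℝ))
    (cword sw : List B) (i : ℕ) : B → ℝ :=
  if i < cword.length then -sroot (cword.getD i (arb B))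
  else π (cs.wordProd (sw.take (i - cword.length))) (sroot (sw.getD (i - cword.length) (arb B)))

/-- The rotation map `τ_c` on almost positive roots. -/
def rotRoot (cs : CoxeterSystem M W) (π : Representation ℝ W (B → ℝ))
    (cword : List B) (v : B → ℝ) : B → ℝ :=
  if h : ∃ k : Fin cword.length, v = -sroot (cword.get k) then
    π (cs.wordProd (cword.take (Classical.choose h).1)) (sroot (cword.get (Classical.choose h)))
  else if h2 : ∃ k : Fin cword.length,
      v = π (cs.wordProd (cword.drop ((k : ℕ) + 1)).reverse) (sroot (cword.get k)) then
    -sroot (cword.get (Classical.choose h2))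
  else π (cs.wordProd cword) v

/-- One elementary commutation of two consecutive commuting letters. -/
def CommStep (cs : CoxeterSystem M W) (u v : List B) : Prop :=
  ∃ (x y : List B) (s t : B), cs.simple s * cs.simple t = cs.simple t * cs.simple s ∧
    u = x ++ s :: t :: y ∧ v = x ++ t :: s :: y

/-- The cyclic shift on positions accompanying the jump of the first letter of a word with
`m` letters: `σ(k) = k - 1` for `k ≥ 1`, and `σ(0) = m - 1` (positions are `0`-indexed). -/
def shift (m : ℕ) (k : ℕ) : ℕ := if k = 0 then m - 1 else k - 1

end CP

/-!
Deleting the first letter `s` of `Q_c` and appending `b` (with `s_b = w₀ s w₀`) shifts every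
position down by one. For `k ≠ 1` the letters of `Q'` counted before `k'` are those of `Q_c`
counted before `k`, minus the first letter, so the root changes by `s` exactly when that letter was
counted, i.e. when `1 ∉ I`. For `k = 1` the new root is `u(α_b)`, where `u` is the product of the
complement of `I ∪ {1}`: this is `w₀` if `1 ∈ I` and `s w₀` otherwise. So everything rests on
`w₀(α_b) = -α_s`. As `s w₀ = w₀ s_b`, the vector `w₀(α_b)` is negated by `s`, hence a multiple of
`α_s`, and it has norm one, hence it is `±α_s`. It is negative since `w₀ s_b` has no right descent
`b`, and such elements map `α_b` to nonnegative vectors (the usual induction through rank-two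
parabolic subgroups).
-/

namespace CoxeterSystem

variable {B : Type} {M : CoxeterMatrix B} {W : Type} [Group W] {cs : CoxeterSystem M W}

theorem isRightDescent_wordProd_append_singleton {l : List B} {x : B}
    (hl : cs.IsReduced (l ++ [x])) : cs.IsRightDescent (cs.wordProd (l ++ [x])) x := by
  have hle := cs.length_wordProd_le l
  rw [CoxeterSystem.IsReduced, List.length_append, List.length_singleton] at hl
  rw [IsRightDescent, hl, cs.wordProd_append, cs.wordProd_singleton,
    cs.simple_mul_simple_cancel_right]
  omega

theorem IsReduced.eq_alternatingWord {l : List B} {i t : B} (hl : cs.IsReduced l)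
    (hmem : ∀ x ∈ l, x = i ∨ x = t) (hi : ¬ cs.IsRightDescent (cs.wordProd l) i) :
    l = alternatingWord i t l.length := by
  induction l using List.reverseRecOn generalizing i t with
  | nil => rfl
  | append_singleton l x ih =>
    obtain rfl : x = t := (hmem x (by simp)).resolve_left <| by
      rintro rfl
      exact hi (isRightDescent_wordProd_append_singleton hl)
    have hl' : cs.IsReduced l := by simpa using hl.take l.length
    have hx : ¬ cs.IsRightDescent (cs.wordProd l) x := by
      have := isRightDescent_wordProd_append_singleton hl
      rwa [cs.wordProd_append, cs.wordProd_singleton, cs.isRightDescent_iff_not_isRightDescent_mul,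
        cs.simple_mul_simple_cancel_right] at this
    rw [List.length_append, List.length_singleton, alternatingWord_succ, List.concat_eq_append,
      ← ih hl' (fun y hy => (hmem y (by simp [hy])).symm) hx]

theorem IsReduced.lt_of_alternatingWord {i t : B} {k : ℕ} (hM : M i t ≠ 0)
    (hl : cs.IsReduced (alternatingWord i t k))
    (hi : ¬ cs.IsRightDescent (cs.wordProd (alternatingWord i t k)) i) : k < M i t := by
  have hle : k ≤ M i t := not_lt.1 fun h => cs.not_isReduced_alternatingWord i t hM h hl
  refine hle.lt_of_ne ?_
  rintro rfl
  obtain ⟨n, hn⟩ : ∃ n, M i t = n + 1 := Nat.exists_eq_succ_of_ne_zero hM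
  have hbraid : cs.wordProd (alternatingWord i t (M i t))
      = cs.wordProd (alternatingWord i t n ++ [i]) := by
    have := cs.wordProd_braidWord_eq i t
    rw [braidWord, braidWord, M.symmetric t i] at this
    rw [this, hn, alternatingWord_succ, List.concat_eq_append]
  rw [hbraid] at hi
  refine hi (isRightDescent_wordProd_append_singleton ?_)
  rw [CoxeterSystem.IsReduced, ← hbraid, hl, length_alternatingWord]
  simp [hn]

variable (cs) in
theorem exists_eq_mul_wordProd_pair (w : W) (i t : B) :
    ∃ (u : W) (l : List B), (∀ x ∈ l, x = i ∨ x = t) ∧ w = u * cs.wordProd l ∧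
      cs.length w = cs.length u + l.length ∧
      ¬ cs.IsRightDescent u i ∧ ¬ cs.IsRightDescent u t := by
  induction h : cs.length w using Nat.strong_induction_on generalizing w with
  | _ n ih =>
  by_cases hdesc : ∃ y, (y = i ∨ y = t) ∧ cs.IsRightDescent w y
  · obtain ⟨y, hy, hwy⟩ := hdesc
    have hlen := cs.isRightDescent_iff.1 hwy
    obtain ⟨u, l, hmem, hw, hlen', hui, hut⟩ := ih _ (by omega) (w * cs.simple y) rfl
    refine ⟨u, l ++ [y], ?_, ?_, ?_, hui, hut⟩
    · simpa [or_imp, forall_and] using ⟨hmem, hy⟩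
    · rw [cs.wordProd_append, cs.wordProd_singleton, ← mul_assoc, ← hw,
        cs.simple_mul_simple_cancel_right]
    · simp only [List.length_append, List.length_singleton]
      omega
  · push Not at hdesc
    exact ⟨w, [], by simp, by simp, by simp [h], hdesc i (Or.inl rfl), hdesc t (Or.inr rfl)⟩

end CoxeterSystem

namespace CP

section CoxeterForm

variable {B : Type} [Fintype B] {M : CoxeterMatrix B}

theorem bil_comm (u v : B → ℝ) : bil M u v = bil M v u := by
  rw [bil, bil, Finset.sum_comm]
  refine Finset.sum_congr rfl fun i _ => Finset.sum_congr rfl fun j _ => ?_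
  rw [M.symmetric j i, mul_comm (u j)]

theorem bil_sub_left (u u' v : B → ℝ) : bil M (u - u') v = bil M u v - bil M u' v := by
  simp only [bil, Pi.sub_apply, sub_mul, Finset.sum_sub_distrib]

theorem bil_sub_right (u v v' : B → ℝ) : bil M u (v - v') = bil M u v - bil M u v' := by
  rw [bil_comm, bil_sub_left, bil_comm v, bil_comm v']

theorem bil_smul_left (r : ℝ) (u v : B → ℝ) : bil M (r • u) v = r * bil M u v := by
  simp only [bil, Pi.smul_apply, smul_eq_mul, Finset.mul_sum, mul_assoc]

theorem bil_smul_right (r : ℝ) (u v : B → ℝ) : bil M u (r • v) = r * bil M u v := by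
  rw [bil_comm, bil_smul_left, bil_comm v]

variable [DecidableEq B]

theorem bil_sroot_sroot (i j : B) :
    bil M (sroot i) (sroot j) = -Real.cos (Real.pi / M i j) := by
  simp [bil, sroot, Pi.single_apply]

theorem bil_sroot_self (i : B) : bil M (sroot i) (sroot i) = 1 := by
  simp [bil_sroot_sroot]

end CoxeterForm

theorem simple_apply_simple_apply {B : Type} {M : CoxeterMatrix B} {W : Type} [Group W]
    {V : Type} [AddCommGroup V] [Module ℝ V] {cs : CoxeterSystem M W}
    {π : Representation ℝ W V} (i : B) (v : V) : π (cs.simple i) (π (cs.simple i) v) = v := by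
  rw [← Module.End.mul_apply, ← map_mul, cs.simple_mul_simple_self, map_one,
    Module.End.one_apply]

section GeometricRepresentation

variable {B : Type} [DecidableEq B] [Fintype B] {M : CoxeterMatrix B} {W : Type} [Group W]

def IsGeometricRep (cs : CoxeterSystem M W) (π : Representation ℝ W (B → ℝ)) : Prop :=
  ∀ (i : B) (v : B → ℝ), π (cs.simple i) v = v - (2 * bil M (sroot i) v) • sroot i

variable {cs : CoxeterSystem M W} {π : Representation ℝ W (B → ℝ)}

namespace IsGeometricRep

variable (hπ : IsGeometricRep cs π)
include hπ

theorem simple_apply_sroot (t i : B) :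
    π (cs.simple t) (sroot i) = sroot i + (2 * Real.cos (Real.pi / M t i)) • sroot t := by
  rw [hπ, bil_sroot_sroot, sub_eq_add_neg, ← neg_smul, mul_neg, neg_neg]

theorem simple_apply_sroot_self (i : B) : π (cs.simple i) (sroot i) = -sroot i := by
  rw [hπ, bil_sroot_self]
  module

theorem bil_simple_apply (i : B) (u v : B → ℝ) :
    bil M (π (cs.simple i) u) (π (cs.simple i) v) = bil M u v := by
  simp only [hπ i, bil_sub_left, bil_sub_right, bil_smul_left, bil_smul_right, bil_sroot_self,
    bil_comm u (sroot i)]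
  ring

theorem bil_apply (w : W) (u v : B → ℝ) : bil M (π w u) (π w v) = bil M u v := by
  obtain ⟨l, rfl⟩ := cs.wordProd_surjective w
  induction l generalizing u v with
  | nil => simp
  | cons a l ih => simp only [cs.wordProd_cons, map_mul, Module.End.mul_apply,
      hπ.bil_simple_apply, ih]

theorem eq_smul_sroot_of_simple_apply_eq_neg {i : B} {v : B → ℝ}
    (hv : π (cs.simple i) v = -v) : v = bil M (sroot i) v • sroot i := by
  rw [hπ] at hv
  linear_combination (norm := module) (1 / 2 : ℝ) • hv

end IsGeometricRep

end GeometricRepresentation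

theorem sin_add_two_mul (x θ : ℝ) :
    Real.sin ((x + 2) * θ) = 2 * Real.cos θ * Real.sin ((x + 1) * θ) - Real.sin (x * θ) := by
  have h₁ : (x + 2) * θ = (x + 1) * θ + θ := by ring
  have h₂ : x * θ = (x + 1) * θ - θ := by ring
  rw [h₁, h₂, Real.sin_add, Real.sin_sub]
  ring

section DihedralRoots

variable {B : Type} [DecidableEq B] [Fintype B] {M : CoxeterMatrix B} {W : Type} [Group W]
  {cs : CoxeterSystem M W} {π : Representation ℝ W (B → ℝ)}

open CoxeterSystem in
theorem IsGeometricRep.sin_smul_wordProd_alternatingWord_apply_sroot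
    (hπ : IsGeometricRep cs π) (i t : B) (k : ℕ) :
    Real.sin (Real.pi / M i t) • π (cs.wordProd (alternatingWord i t k)) (sroot i) =
      if Even k then
        Real.sin ((k + 1) * (Real.pi / M i t)) • sroot i +
          Real.sin (k * (Real.pi / M i t)) • sroot t
      else
        Real.sin (k * (Real.pi / M i t)) • sroot i +
          Real.sin ((k + 1) * (Real.pi / M i t)) • sroot t := by
  induction k with
  | zero => simp [alternatingWord]
  | succ k ih =>
    have hrec := sin_add_two_mul k (Real.pi / M i t)
    rw [← one_add_one_eq_two, ← add_assoc] at hrec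
    rw [alternatingWord_succ', cs.wordProd_cons, map_mul, Module.End.mul_apply, ← map_smul, ih]
    by_cases hk : Even k
    · simp only [hk, if_true, Nat.even_add_one, not_true, if_false]
      rw [map_add, map_smul, map_smul, hπ.simple_apply_sroot_self, hπ.simple_apply_sroot,
        M.symmetric t i]
      push_cast
      linear_combination (norm := module) -hrec • sroot t
    · simp only [hk, if_false, Nat.even_add_one, not_false_eq_true, if_true]
      rw [map_add, map_smul, map_smul, hπ.simple_apply_sroot_self, hπ.simple_apply_sroot]
      push_cast
      linear_combination (norm := module) -hrec • sroot i

open CoxeterSystem in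
theorem IsGeometricRep.exists_nonneg_wordProd_alternatingWord_apply_sroot
    (hπ : IsGeometricRep cs π) {i t : B} (hit : i ≠ t) {k : ℕ}
    (hk : k < M i t) : ∃ a b : ℝ, 0 ≤ a ∧ 0 ≤ b ∧
      π (cs.wordProd (alternatingWord i t k)) (sroot i) = a • sroot i + b • sroot t := by
  have hm : (1 : ℝ) < M i t := by
    have := M.off_diagonal i t hit
    exact_mod_cast (show 1 < M i t by omega)
  have hsin : 0 < Real.sin (Real.pi / M i t) :=
    Real.sin_pos_of_pos_of_lt_pi (by positivity) (div_lt_self Real.pi_pos hm)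
  have hsin_nonneg : ∀ x : ℝ, 0 ≤ x → x ≤ M i t → 0 ≤ Real.sin (x * (Real.pi / M i t)) := by
    intro x hx₀ hx₁
    apply Real.sin_nonneg_of_nonneg_of_le_pi (by positivity)
    rw [mul_div_assoc', div_le_iff₀ (by positivity), mul_comm]
    gcongr
  have hk₁ : (k : ℝ) + 1 ≤ M i t := by exact_mod_cast hk
  obtain ⟨a, b, ha, hb, hab⟩ : ∃ a b : ℝ, 0 ≤ a ∧ 0 ≤ b ∧
      Real.sin (Real.pi / M i t) • π (cs.wordProd (alternatingWord i t k)) (sroot i) =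
        a • sroot i + b • sroot t := by
    rw [hπ.sin_smul_wordProd_alternatingWord_apply_sroot]
    split_ifs
    · exact ⟨_, _, hsin_nonneg _ (by positivity) hk₁,
        hsin_nonneg _ (by positivity) (by linarith), rfl⟩
    · exact ⟨_, _, hsin_nonneg _ (by positivity) (by linarith),
        hsin_nonneg _ (by positivity) hk₁, rfl⟩
  refine ⟨a / Real.sin (Real.pi / M i t), b / Real.sin (Real.pi / M i t),
    div_nonneg ha hsin.le, div_nonneg hb hsin.le, ?_⟩
  rw [div_eq_inv_mul a, div_eq_inv_mul b, mul_smul, mul_smul, ← smul_add, ← hab,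
    inv_smul_smul₀ hsin.ne']

end DihedralRoots

section PositiveRoots

open CoxeterSystem

variable {B : Type} [DecidableEq B] [Fintype B] {M : CoxeterMatrix B} {W : Type} [Group W]
  {cs : CoxeterSystem M W} {π : Representation ℝ W (B → ℝ)}

theorem IsGeometricRep.apply_sroot_nonneg (hπ : IsGeometricRep cs π) (hM : ∀ i j, M i j ≠ 0)
    {w : W} {i : B} (hi : ¬ cs.IsRightDescent w i) : 0 ≤ π w (sroot i) := by
  induction h : cs.length w using Nat.strong_induction_on generalizing w i with
  | _ n ih =>
  obtain rfl | hw := eq_or_ne w 1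
  · simp [sroot]
  obtain ⟨t, ht⟩ := cs.exists_rightDescent_of_ne_one hw
  have hit : i ≠ t := by
    rintro rfl
    exact hi ht
  obtain ⟨u, l, hmem, rfl, hlen, hui, hut⟩ := cs.exists_eq_mul_wordProd_pair w i t
  have hl : l ≠ [] := by
    rintro rfl
    simp only [cs.wordProd_nil, mul_one] at ht
    exact hut ht
  have hred : cs.IsReduced l := by
    have := cs.length_mul_le u (cs.wordProd l)
    exact le_antisymm (cs.length_wordProd_le l) (by omega)
  have hli : ¬ cs.IsRightDescent (cs.wordProd l) i := by
    intro hdesc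
    apply hi
    have := cs.length_mul_le u (cs.wordProd l * cs.simple i)
    rw [IsRightDescent, mul_assoc]
    rw [IsRightDescent, hred] at hdesc
    omega
  have hlalt := hred.eq_alternatingWord hmem hli
  have hlt : l.length < M i t := by
    rw [hlalt] at hred hli
    exact hred.lt_of_alternatingWord (hM i t) hli
  obtain ⟨a, b, ha, hb, hab⟩ := hπ.exists_nonneg_wordProd_alternatingWord_apply_sroot hit hlt
  have hu : cs.length u < n := by
    have := List.length_pos_iff.2 hl
    omega
  rw [map_mul, Module.End.mul_apply, hlalt, hab, map_add, map_smul, map_smul]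
  exact add_nonneg (smul_nonneg ha (ih _ hu hui rfl)) (smul_nonneg hb (ih _ hu hut rfl))

theorem IsGeometricRep.longest_apply_sroot (hπ : IsGeometricRep cs π) (hM : ∀ i j, M i j ≠ 0)
    {w₀ : W} (hw₀max : ∀ w : W, cs.length w ≤ cs.length w₀)
    (hw₀uniq : ∀ w : W, cs.length w = cs.length w₀ → w = w₀)
    {s b : B} (hb : cs.simple b = w₀ * cs.simple s * w₀) :
    π w₀ (sroot b) = -sroot s := by
  have hw₀sq : w₀ * w₀ = 1 := by
    nth_rw 2 [← hw₀uniq _ (cs.length_inv w₀)]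
    exact mul_inv_cancel w₀
  have hcomm : cs.simple s * w₀ = w₀ * cs.simple b := by
    rw [hb, ← mul_assoc, ← mul_assoc, hw₀sq, one_mul]
  set v := π w₀ (sroot b) with hv_def
  have hv : v = bil M (sroot s) v • sroot s := by
    refine hπ.eq_smul_sroot_of_simple_apply_eq_neg ?_
    rw [hv_def, ← Module.End.mul_apply, ← map_mul, hcomm, map_mul, Module.End.mul_apply,
      hπ.simple_apply_sroot_self, map_neg]
  set c := bil M (sroot s) v
  have hc_sq : c * c = 1 := by
    have := hπ.bil_apply w₀ (sroot b) (sroot b)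
    rwa [← hv_def, hv, bil_smul_left, bil_smul_right, bil_sroot_self, bil_sroot_self,
      mul_one] at this
  have hdesc : ¬ cs.IsRightDescent (w₀ * cs.simple b) b := by
    rw [cs.not_isRightDescent_iff, cs.simple_mul_simple_cancel_right]
    have := hw₀max (w₀ * cs.simple b)
    exact ((cs.length_mul_simple w₀ b).resolve_left (by omega)).symm
  have hc_nonpos : c ≤ 0 := by
    have hpos := hπ.apply_sroot_nonneg hM hdesc s
    rw [map_mul, Module.End.mul_apply, hπ.simple_apply_sroot_self, map_neg, ← hv_def,
      hv] at hpos
    simpa [sroot] using hpos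
  rw [hv, show c = -1 by nlinarith, neg_one_smul]

end PositiveRoots

section JumpingWord

variable {B : Type} [Nonempty B] {M : CoxeterMatrix B} {W : Type} [Group W]
  {cs : CoxeterSystem M W}

def prefixWord (Q : List B) (I : Finset ℕ) (j : ℕ) : List B :=
  ((List.range j).filter (· ∉ I)).map (fun x => Q.getD x (arb B))

theorem prefixWord_succ (Q : List B) (I : Finset ℕ) (j : ℕ) :
    prefixWord Q I (j + 1) = prefixWord Q I j ++ if j ∈ I then [] else [Q.getD j (arb B)] := by
  unfold prefixWord
  split_ifs <;> simp [List.range_succ, List.filter_append, *]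

theorem prefixWord_succ_of_notMem {Q : List B} {I : Finset ℕ} (h0 : 0 ∉ I) (j : ℕ) :
    prefixWord Q I (j + 1) = Q.getD 0 (arb B) :: prefixWord Q (insert 0 I) (j + 1) := by
  induction j with
  | zero => simp [h0, prefixWord]
  | succ j ih => simp [prefixWord_succ Q _ (j + 1), ih]

theorem mem_image_shift_iff {m j : ℕ} {I : Finset ℕ} (hI : I ⊆ Finset.range m)
    (hj : j + 1 < m) :
    j ∈ I.image (shift m) ↔ j + 1 ∈ I := by
  rw [Finset.mem_image]
  constructor
  · rintro ⟨y, hy, hyj⟩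
    have := Finset.mem_range.1 (hI hy)
    unfold shift at hyj
    split_ifs at hyj with hy0
    · omega
    · rwa [show j + 1 = y by omega]
  · exact fun h => ⟨j + 1, h, by simp [shift]⟩

theorem prefixWord_jump {T : List B} {I : Finset ℕ} (s b : B)
    (hI : I ⊆ Finset.range (T.length + 1)) {j : ℕ} (hj : j ≤ T.length) :
    prefixWord (T ++ [b]) (I.image (shift (T.length + 1))) j
      = prefixWord (s :: T) (insert 0 I) (j + 1) := by
  induction j with
  | zero => simp [prefixWord]
  | succ j ih =>
    rw [prefixWord_succ, prefixWord_succ (s :: T), ih (by omega),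
      List.getD_append _ _ _ _ (by omega)]
    simp [mem_image_shift_iff hI (by omega : j + 1 < T.length + 1)]

theorem wordProd_complWord_of_notMem {I : Finset ℕ} (h0 : 0 ∉ I) (s : B) (T : List B) :
    cs.wordProd (complWord (s :: T) I)
      = cs.simple s * cs.wordProd (complWord (s :: T) (insert 0 I)) := by
  change cs.wordProd (prefixWord _ _ (T.length + 1))
    = _ * cs.wordProd (prefixWord _ _ (T.length + 1))
  rw [prefixWord_succ_of_notMem h0, cs.wordProd_cons]
  rfl

variable [DecidableEq B] {π : Representation ℝ W (B → ℝ)}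

theorem rootFn_jump {T : List B} {I : Finset ℕ} (s b : B)
    (hI : I ⊆ Finset.range (T.length + 1)) {k : ℕ} (hk : k < T.length) :
    rootFn cs π (T ++ [b]) (I.image (shift (T.length + 1))) k
      = rootFn cs π (s :: T) (insert 0 I) (k + 1) := by
  change π (cs.wordProd (prefixWord _ _ _)) _ = π (cs.wordProd (prefixWord _ _ _)) _
  rw [prefixWord_jump s b hI hk.le, List.getD_append _ _ _ _ hk]
  simp

theorem rootFn_jump_length {T : List B} {I : Finset ℕ} (s b : B)
    (hI : I ⊆ Finset.range (T.length + 1)) :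
    rootFn cs π (T ++ [b]) (I.image (shift (T.length + 1))) T.length
      = π (cs.wordProd (complWord (s :: T) (insert 0 I))) (sroot b) := by
  change π (cs.wordProd (prefixWord _ _ _)) _ = π (cs.wordProd (prefixWord _ _ _)) _
  rw [prefixWord_jump s b hI le_rfl]
  simp

theorem rootFn_zero (Q : List B) (I : Finset ℕ) :
    rootFn cs π Q I 0 = sroot (Q.getD 0 (arb B)) := by
  simp [rootFn]

theorem rootFn_succ_of_notMem {Q : List B} {I : Finset ℕ} (h0 : 0 ∉ I) (k : ℕ) :
    rootFn cs π Q I (k + 1)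
      = π (cs.simple (Q.getD 0 (arb B))) (rootFn cs π Q (insert 0 I) (k + 1)) := by
  change π (cs.wordProd (prefixWord _ _ _)) _
    = π (cs.simple _) (π (cs.wordProd (prefixWord _ _ _)) _)
  rw [prefixWord_succ_of_notMem h0, cs.wordProd_cons, map_mul, Module.End.mul_apply]

end JumpingWord

theorem statement_11_general
    {B : Type} [DecidableEq B] [Fintype B] [Nonempty B]
    {M : CoxeterMatrix B} {W : Type} [Group W]
    (cs : CoxeterSystem M W)
    (hcrys : ∀ i j : B, i ≠ j → M i j ∈ ({2, 3, 4, 6} : Set ℕ))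
    (π : Representation ℝ W (B → ℝ))
    (hgeom : ∀ (i : B) (v : B → ℝ),
      π (cs.simple i) v = v - (2 * bil M (sroot i) v) • sroot i)
    (w₀ : W)
    (hw₀max : ∀ w : W, cs.length w ≤ cs.length w₀)
    (hw₀uniq : ∀ w : W, cs.length w = cs.length w₀ → w = w₀)
    (s : B) (ctail : List B)
    (sw : List B)
    (b : B) (hb : cs.simple b = w₀ * cs.simple s * w₀)
    (I : Finset ℕ) (hI : IsCluster cs w₀ ((s :: ctail) ++ sw) I) :
    ∀ k : ℕ, k < ((s :: ctail) ++ sw).length →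
      ((k = 0 → 0 ∈ I →
        rootFn cs π ((ctail ++ sw) ++ [b]) (I.image (shift ((s :: ctail) ++ sw).length)) (shift ((s :: ctail) ++ sw).length k) = -rootFn cs π ((s :: ctail) ++ sw) I k) ∧
      (k = 0 → 0 ∉ I →
        rootFn cs π ((ctail ++ sw) ++ [b]) (I.image (shift ((s :: ctail) ++ sw).length)) (shift ((s :: ctail) ++ sw).length k) = rootFn cs π ((s :: ctail) ++ sw) I k) ∧
      (k ≠ 0 → 0 ∈ I →
        rootFn cs π ((ctail ++ sw) ++ [b]) (I.image (shift ((s :: ctail) ++ sw).length)) (shift ((s :: ctail) ++ sw).length k) = rootFn cs π ((s :: ctail) ++ sw) I k) ∧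
      (k ≠ 0 → 0 ∉ I →
        rootFn cs π ((ctail ++ sw) ++ [b]) (I.image (shift ((s :: ctail) ++ sw).length)) (shift ((s :: ctail) ++ sw).length k) = π (cs.simple s) (rootFn cs π ((s :: ctail) ++ sw) I k))) := by
  have hπ : IsGeometricRep cs π := hgeom
  have hM : ∀ i j, M i j ≠ 0 := by
    intro i j
    rcases eq_or_ne i j with rfl | hij
    · simp
    · have := hcrys i j hij
      simp only [Set.mem_insert_iff, Set.mem_singleton_iff] at this
      omega
  have hlongest := hπ.longest_apply_sroot hM hw₀max hw₀uniq hb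
  obtain ⟨hIrange, hw₀, -⟩ := hI
  simp only [List.cons_append, List.length_cons] at hIrange hw₀ ⊢
  generalize ctail ++ sw = T at hIrange hw₀ ⊢
  rintro (_ | k) hk
  · refine ⟨fun _ h0 => ?_, fun _ h0 => ?_, fun h => absurd rfl h, fun h => absurd rfl h⟩
    · rw [show shift (T.length + 1) 0 = T.length by simp [shift], rootFn_jump_length s b hIrange,
        Finset.insert_eq_of_mem h0, hw₀, hlongest, rootFn_zero, List.getD_cons_zero]
    · have hw : cs.wordProd (complWord (s :: T) (insert 0 I)) = cs.simple s * w₀ := by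
        rw [← hw₀, wordProd_complWord_of_notMem h0, cs.simple_mul_simple_cancel_left]
      rw [show shift (T.length + 1) 0 = T.length by simp [shift], rootFn_jump_length s b hIrange,
        hw, map_mul, Module.End.mul_apply, hlongest, map_neg, hπ.simple_apply_sroot_self, neg_neg,
        rootFn_zero, List.getD_cons_zero]
  · have hshift : shift (T.length + 1) (k + 1) = k := by simp [shift]
    refine ⟨fun h => absurd h k.succ_ne_zero, fun h => absurd h k.succ_ne_zero, fun _ h0 => ?_,
      fun _ h0 => ?_⟩
    · rw [hshift, rootFn_jump s b hIrange (by omega), Finset.insert_eq_of_mem h0]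
    · rw [hshift, rootFn_jump s b hIrange (by omega), rootFn_succ_of_notMem h0,
        List.getD_cons_zero, simple_apply_simple_apply]

theorem statement_11
    {B : Type} [DecidableEq B] [Fintype B] [Nonempty B]
    {M : CoxeterMatrix B} {W : Type} [Group W] [Finite W]
    (cs : CoxeterSystem M W)
    (hcrys : ∀ i j : B, i ≠ j → M i j ∈ ({2, 3, 4, 6} : Set ℕ))
    (π : Representation ℝ W (B → ℝ))
    (hgeom : ∀ (i : B) (v : B → ℝ),
      π (cs.simple i) v = v - (2 * bil M (sroot i) v) • sroot i)
    (w₀ : W)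
    (hw₀max : ∀ w : W, cs.length w ≤ cs.length w₀)
    (hw₀uniq : ∀ w : W, cs.length w = cs.length w₀ → w = w₀)
    (s : B) (ctail : List B)
    (hcnodup : (s :: ctail).Nodup) (hcfull : ∀ i : B, i ∈ s :: ctail)
    (sw : List B) (hsw : IsRW cs w₀ sw)
    (pos : Fin sw.length → ℕ) (hposmono : StrictMono pos)
    (hposlet : ∀ k : Fin sw.length, sw.get k = cInf (s :: ctail) (pos k))
    (hposlex : ∀ g : Fin sw.length → ℕ, StrictMono g →
      IsRW cs w₀ (List.ofFn fun k => cInf (s :: ctail) (g k)) → LexLE pos g)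
    (b : B) (hb : cs.simple b = w₀ * cs.simple s * w₀)
    (I : Finset ℕ) (hI : IsCluster cs w₀ ((s :: ctail) ++ sw) I) :
    ∀ k : ℕ, k < ((s :: ctail) ++ sw).length →
      ((k = 0 → 0 ∈ I →
        rootFn cs π ((ctail ++ sw) ++ [b]) (I.image (shift ((s :: ctail) ++ sw).length)) (shift ((s :: ctail) ++ sw).length k) = -rootFn cs π ((s :: ctail) ++ sw) I k) ∧
      (k = 0 → 0 ∉ I →
        rootFn cs π ((ctail ++ sw) ++ [b]) (I.image (shift ((s :: ctail) ++ sw).length)) (shift ((s :: ctail) ++ sw).length k) = rootFn cs π ((s :: ctail) ++ sw) I k) ∧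
      (k ≠ 0 → 0 ∈ I →
        rootFn cs π ((ctail ++ sw) ++ [b]) (I.image (shift ((s :: ctail) ++ sw).length)) (shift ((s :: ctail) ++ sw).length k) = rootFn cs π ((s :: ctail) ++ sw) I k) ∧
      (k ≠ 0 → 0 ∉ I →
        rootFn cs π ((ctail ++ sw) ++ [b]) (I.image (shift ((s :: ctail) ++ sw).length)) (shift ((s :: ctail) ++ sw).length k) = π (cs.simple s) (rootFn cs π ((s :: ctail) ++ sw) I k))) :=
  statement_11_general cs hcrys π hgeom w₀ hw₀max hw₀uniq s ctail sw b hb I hI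

end CP
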